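/- arXiv:1407.3555 — 6 statements merged into one kernel-verified Lean document; each statement's English description precedes it below -/
import Mathlib

section
/- Define ι(τ,κ) = ½((κ − τ⌊κ/τ⌋)(κ − τ⌊κ/τ⌋ − τ) − κ(κ − τ − 2)) for reals τ, κ > 0. If τ, κ > 0 satisfy ι(τ,κ) = 0 and 0 ≤ ε < τ(⌊κ/τ⌋ + 1) − κ, then ι(τ, κ+ε) = −ε(τ⌊κ/τ⌋ − 1). -/
/-- The function ι(τ,κ) = ½((κ − τ⌊κ/τ⌋)(κ − τ⌊κ/τ⌋ − τ) − κ(κ − τ − 2)). -/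
noncomputable def iota (τ κ : ℝ) : ℝ :=
  ((κ - τ * (⌊κ / τ⌋ : ℝ)) * (κ - τ * (⌊κ / τ⌋ : ℝ) - τ) - κ * (κ - τ - 2)) / 2

theorem stmt_4 (τ κ ε : ℝ) (hτ : 0 < τ) (hκ : 0 < κ) (h : iota τ κ = 0)
    (hε0 : 0 ≤ ε) (hε : ε < τ * ((⌊κ / τ⌋ : ℝ) + 1) - κ) :
    iota τ (κ + ε) = -ε * (τ * (⌊κ / τ⌋ : ℝ) - 1) := by
  have hfl : ⌊(κ + ε) / τ⌋ = ⌊κ / τ⌋ := by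
    rw [Int.floor_eq_iff]
    constructor
    · have h1 := Int.floor_le (κ / τ)
      rw [le_div_iff₀ hτ] at h1 ⊢
      nlinarith
    · rw [div_lt_iff₀ hτ]; nlinarith
  unfold iota at h ⊢
  rw [hfl]
  nlinarith [h]
end

section
/- Define ι(τ,κ) = ½((κ − τ⌊κ/τ⌋)(κ − τ⌊κ/τ⌋ − τ) − κ(κ − τ − 2)) for reals τ, κ > 0. If τ, κ > 0 satisfy ι(τ,κ) = 0, τ does not divide κ, and 0 ≤ ε ≤ κ − τ⌊κ/τ⌋, then ι(τ, κ−ε) = ε(τ⌊κ/τ⌋ − 1). -/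
theorem stmt_6 (τ κ ε : ℝ) (hτ : 0 < τ) (hκ : 0 < κ) (h : iota τ κ = 0)
    (hndvd : ¬ ∃ m : ℤ, κ = m * τ) (hε0 : 0 ≤ ε)
    (hε : ε ≤ κ - τ * (⌊κ / τ⌋ : ℝ)) :
    iota τ (κ - ε) = ε * (τ * (⌊κ / τ⌋ : ℝ) - 1) := by
  have hfl : ⌊(κ - ε) / τ⌋ = ⌊κ / τ⌋ := by
    rw [Int.floor_eq_iff]
    constructor
    · rw [le_div_iff₀ hτ]
      linarith
    · have h1 : κ / τ < ⌊κ / τ⌋ + 1 := Int.lt_floor_add_one _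
      rw [div_lt_iff₀ hτ]
      rw [div_lt_iff₀ hτ] at h1
      push_cast at h1 ⊢
      linarith
  unfold iota at h ⊢
  rw [hfl]
  nlinarith [h]
end

section
/- For reals τ, κ > 0, if ι(τ,κ) = 0 where ι(τ,κ) = ½((κ − τ⌊κ/τ⌋)(κ − τ⌊κ/τ⌋ − τ) − κ(κ − τ − 2)), then τ + 1 < κ ≤ τ + 2. -/
theorem stmt_7 (τ κ : ℝ) (hτ : 0 < τ) (hκ : 0 < κ) (h : iota τ κ = 0) :
    τ + 1 < κ ∧ κ ≤ τ + 2 := by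
  unfold iota at h
  have hn0 : (0:ℤ) ≤ ⌊κ / τ⌋ := Int.floor_nonneg.mpr (by positivity)
  have h1 : ((⌊κ / τ⌋ : ℤ) : ℝ) ≤ κ / τ := Int.floor_le _
  have h2 : κ / τ < ((⌊κ / τ⌋ : ℤ) : ℝ) + 1 := Int.lt_floor_add_one _
  have h1' : ((⌊κ / τ⌋ : ℤ) : ℝ) * τ ≤ κ := by
    rw [← le_div_iff₀ hτ]; exact h1
  have h2' : κ < (((⌊κ / τ⌋ : ℤ) : ℝ) + 1) * τ := by
    rw [← div_lt_iff₀ hτ]; exact h2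
  have heq : (κ - τ * (⌊κ / τ⌋ : ℝ)) * (κ - τ * (⌊κ / τ⌋ : ℝ) - τ) = κ * (κ - τ - 2) := by
    linarith
  rcases eq_or_lt_of_le hn0 with h0 | h0
  · exfalso
    have : ((⌊κ / τ⌋ : ℤ) : ℝ) = 0 := by exact_mod_cast h0.symm
    rw [this] at heq
    nlinarith
  · have hn1 : (1:ℝ) ≤ ((⌊κ / τ⌋ : ℤ) : ℝ) := by exact_mod_cast h0
    set n : ℝ := ((⌊κ / τ⌋ : ℤ) : ℝ) with hn
    have hr0 : 0 ≤ κ - τ * n := by nlinarith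
    have hrτ : κ - τ * n < τ := by nlinarith
    have hrκ : τ * n ≥ τ := by nlinarith
    constructor
    · by_contra hle
      push_neg at hle
      have hr1 : κ - τ * n ≤ 1 := by nlinarith
      have hκτr : τ + (κ - τ * n) ≤ κ := by nlinarith
      have hP : 0 ≤ κ * (τ + 1 - κ) := mul_nonneg hκ.le (by linarith)
      rcases le_or_gt τ 1 with hτ1 | hτ1
      · nlinarith [mul_nonneg hr0 (sub_nonneg.mpr hτ1), sq_nonneg (κ - τ * n)]
      · nlinarith [mul_nonneg (sub_nonneg.mpr hr1) (by linarith : (0:ℝ) ≤ τ - 1),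
          sq_nonneg (κ - τ * n)]
    · nlinarith [mul_nonneg hr0 (le_of_lt (sub_pos.mpr hrτ))]
end

section
/- For positive integers t ≤ k with t ≤ log k and k sufficiently large, the number SP_{t,k} of set partitions of {1,…,k} with every block of size at most t satisfies SP_{t,k} ≤ exp(k·log k − (k/t)·log k − k·log t + 3k). -/
/-!
A partition of a linearly ordered finite set is determined by the map sending each element to the
least element of its block. That map is the identity on its image `M`, the set of block minima,
and sends the complement of `M` into `M`; blocks of size at most `t` force `k ≤ t * #M`. Hence
`SP_{t,k} ≤ ∑_{M : k ≤ t * #M} #M ^ (k - #M) ≤ 2 ^ k * max_m m ^ (k - m)`, and three instances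
of `log x ≤ x - 1` bound `(k - m) * log m + k` by the claimed exponent.
-/

open Finset Real

namespace Finpartition

variable {α : Type*} [DecidableEq α] {s : Finset α}

theorem part_injective : Function.Injective (part : Finpartition s → α → Finset α) := by
  intro P Q h
  ext B
  constructor
  · intro hB
    obtain ⟨x, hx, rfl⟩ := P.part_surjOn hB
    simpa [h] using Q.part_mem.2 hx
  · intro hB
    obtain ⟨x, hx, rfl⟩ := Q.part_surjOn hB
    simpa [h] using P.part_mem.2 hx

end Finpartition

section BlockMin

variable {α : Type*} [Fintype α] [LinearOrder α]

namespace Finpartition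

def blockMin (P : Finpartition (univ : Finset α)) (x : α) : α :=
  (P.part x).min' (P.part_nonempty.2 (mem_univ x))

variable (P : Finpartition (univ : Finset α))

theorem blockMin_mem_part (x : α) : P.blockMin x ∈ P.part x := min'_mem _ _

theorem blockMin_eq_blockMin_iff {x y : α} :
    P.blockMin x = P.blockMin y ↔ P.part x = P.part y := by
  refine ⟨fun h => ?_, fun h => by simp only [blockMin, h]⟩
  exact P.eq_of_mem_parts (P.part_mem.2 (mem_univ x)) (P.part_mem.2 (mem_univ y))
    (P.blockMin_mem_part x) (h ▸ P.blockMin_mem_part y)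

theorem blockMin_blockMin (x : α) : P.blockMin (P.blockMin x) = P.blockMin x := by
  rw [blockMin_eq_blockMin_iff]
  exact P.part_eq_of_mem (P.part_mem.2 (mem_univ x)) (P.blockMin_mem_part x)

theorem filter_blockMin_eq (x : α) :
    ({y | P.blockMin y = P.blockMin x} : Finset α) = P.part x := by
  ext y
  simp [P.blockMin_eq_blockMin_iff, P.mem_part_iff_part_eq_part (mem_univ y) (mem_univ x)]

theorem blockMin_injective :
    Function.Injective (blockMin : Finpartition (univ : Finset α) → α → α) := by
  intro P Q h
  apply part_injective
  funext x
  rw [← P.filter_blockMin_eq, ← Q.filter_blockMin_eq, h]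

theorem card_le_mul_card_image_blockMin {t : ℕ} (ht : ∀ B ∈ P.parts, #B ≤ t) :
    Fintype.card α ≤ t * #(univ.image P.blockMin) := by
  refine card_le_mul_card_image _ _ fun _ hb => ?_
  obtain ⟨x, -, rfl⟩ := mem_image.1 hb
  rw [P.filter_blockMin_eq]
  exact ht _ (P.part_mem.2 (mem_univ x))

theorem blockMin_mem_piFinset :
    P.blockMin ∈ Fintype.piFinset fun x =>
      if x ∈ univ.image P.blockMin then {x} else univ.image P.blockMin := by
  rw [Fintype.mem_piFinset]
  intro x
  split_ifs with hx
  · obtain ⟨y, -, rfl⟩ := mem_image.1 hx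
    simp [blockMin_blockMin]
  · exact mem_image_of_mem _ (mem_univ x)

end Finpartition

theorem card_finpartition_le (t : ℕ) :
    Nat.card {P : Finpartition (univ : Finset α) // ∀ B ∈ P.parts, #B ≤ t} ≤
      ∑ M : Finset α with Fintype.card α ≤ t * #M, #M ^ (Fintype.card α - #M) := by
  let S M : Finset (α → α) := Fintype.piFinset fun x => if x ∈ M then {x} else M
  calc Nat.card {P : Finpartition (univ : Finset α) // ∀ B ∈ P.parts, #B ≤ t}
      ≤ #(({M : Finset α | Fintype.card α ≤ t * #M} : Finset _).biUnion S) := by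
        rw [← Nat.card_eq_finsetCard]
        refine Nat.card_le_card_of_injective
          (fun P => ⟨P.1.blockMin, mem_biUnion.2 ⟨_, ?_, P.1.blockMin_mem_piFinset⟩⟩) ?_
        · exact mem_filter.2 ⟨mem_univ _, P.1.card_le_mul_card_image_blockMin P.2⟩
        · intro P Q h
          exact Subtype.ext (Finpartition.blockMin_injective (congrArg Subtype.val h))
    _ ≤ ∑ M : Finset α with Fintype.card α ≤ t * #M, #(S M) := card_biUnion_le
    _ = ∑ M : Finset α with Fintype.card α ≤ t * #M, #M ^ (Fintype.card α - #M) := by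
        refine sum_congr rfl fun M _ => ?_
        simp [S, apply_ite card, prod_ite, filter_notMem_eq_sdiff, ← compl_eq_univ_sdiff,
          card_compl]

end BlockMin

theorem sub_mul_log_add_le {k t m : ℝ} (ht : 0 < t) (hm : 0 < m) (hk : 0 < k)
    (htk : t ≤ log k) (hkm : k ≤ t * m) :
    (k - m) * log m + k ≤ k * log k - k / t * log k - k * log t + 3 * k := by
  have hkm_log : log k - log m ≤ k / m - 1 := by
    rw [← log_div hk.ne' hm.ne']
    exact log_le_sub_one_of_pos (div_pos hk hm)
  have htmk_log : log t + log m - log k ≤ t * m / k - 1 := by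
    rw [← log_mul ht.ne' hm.ne', ← log_div (mul_pos ht hm).ne' hk.ne']
    exact log_le_sub_one_of_pos (div_pos (mul_pos ht hm) hk)
  have hlogk : (k / t - m) * log k ≤ (k / t - m) * t :=
    mul_le_mul_of_nonpos_left htk (by rw [sub_nonpos, div_le_iff₀ ht]; linarith)
  linarith [mul_le_mul_of_nonneg_left hkm_log hm.le, mul_le_mul_of_nonneg_left htmk_log hk.le,
    mul_div_cancel₀ k hm.ne', mul_div_cancel₀ (t * m) hk.ne', div_mul_cancel₀ k ht.ne']

theorem two_pow_le_exp (n : ℕ) : (2 : ℝ) ^ n ≤ exp n := by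
  calc (2 : ℝ) ^ n ≤ exp 1 ^ n := by
        gcongr
        linarith [add_one_le_exp (1 : ℝ)]
    _ = exp n := by rw [← exp_nat_mul, mul_one]

theorem cast_pow_sub_le_exp {k t m : ℕ} (ht : 0 < t) (htk : (t : ℝ) ≤ log k) (hm : 0 < m)
    (hmk : m ≤ k) (hkm : k ≤ t * m) :
    (m : ℝ) ^ (k - m) ≤ exp (k * log k - k / t * log k - k * log t + 3 * k - k) := by
  have hm' : (0 : ℝ) < m := by exact_mod_cast hm
  rw [← exp_log (pow_pos hm' _), exp_le_exp, log_pow, Nat.cast_sub hmk]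
  have := sub_mul_log_add_le (by positivity) hm' (by exact_mod_cast hm.trans_le hmk) htk
    (by exact_mod_cast hkm)
  linarith

theorem stmt_14 :
    ∃ k₀ : ℕ, ∀ k : ℕ, k₀ ≤ k → ∀ t : ℕ, 1 ≤ t → (t : ℝ) ≤ Real.log k →
      (Nat.card {P : Finpartition (Finset.univ : Finset (Fin k)) //
          ∀ B ∈ P.parts, B.card ≤ t} : ℝ) ≤
        Real.exp ((k : ℝ) * Real.log k - ((k : ℝ) / t) * Real.log k -
          (k : ℝ) * Real.log t + 3 * k) := by
  refine ⟨0, fun k _ t ht htk => ?_⟩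
  set T : ℝ := k * log k - k / t * log k - k * log t + 3 * k
  have hk : 0 < k := Nat.pos_of_ne_zero <| by rintro rfl; simp at htk; omega
  have hcount := card_finpartition_le (α := Fin k) t
  simp only [Fintype.card_fin] at hcount
  calc (Nat.card {P : Finpartition (univ : Finset (Fin k)) // ∀ B ∈ P.parts, #B ≤ t} : ℝ)
      ≤ ∑ M : Finset (Fin k) with k ≤ t * #M, (#M : ℝ) ^ (k - #M) := by exact_mod_cast hcount
    _ ≤ ∑ M : Finset (Fin k) with k ≤ t * #M, exp (T - k) := by
        refine sum_le_sum fun M hM => ?_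
        have hkM := (mem_filter.1 hM).2
        have hM0 : 0 < #M := Nat.pos_of_ne_zero fun h => by rw [h, mul_zero] at hkM; omega
        exact cast_pow_sub_le_exp ht htk hM0 ((card_le_univ M).trans_eq (Fintype.card_fin k)) hkM
    _ ≤ 2 ^ k * exp (T - k) := by
        rw [sum_const, nsmul_eq_mul]
        gcongr
        exact_mod_cast (card_filter_le _ _).trans_eq (by simp)
    _ ≤ exp k * exp (T - k) := by gcongr; exact two_pow_le_exp k
    _ = exp T := by rw [← exp_add, add_sub_cancel]
end

section
/- Let 0 < p < 1, set q = 1−p, and define Λ*(x) = x·log(x/p) + (1−x)·log((1−x)/q) for x ∈ [0,1] (with Λ*(0) = log(1/q) and Λ*(1) = log(1/p), interpreting 0·log 0 = 0). Let n₁, n₂ be positive integers and let X, Y be independent random variables with X ~ Bin(n₁, p) and Y/2 ~ Bin(n₂, p). Then for all 0 ≤ x ≤ p, Pr(X + Y ≤ (n₁ + 2n₂)x) ≤ exp(−½(n₁ + 2n₂)·Λ*(x)). -/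
/-!
Chernoff's bound with `t = s / 2 ≤ 0` gives
`P(X + 2Z ≤ N x) ≤ exp (-(s/2) N x + n₁ Λ(s/2) + n₂ Λ(s))`, where `N = n₁ + 2 n₂` and
`Λ(s) = log (p eˢ + 1 - p)` is the Bernoulli cumulant generating function. By Cauchy–Schwarz
`Λ(s/2) ≤ Λ(s)/2`, so the bound is at most `exp (-(N/2) (s x - Λ(s)))` for every `s ≤ 0`.
For `0 < x ≤ p` the Legendre transform `sup_s (s x - Λ(s)) = Λ*(x)` is attained at
`s = log (x (1 - p) / (p (1 - x))) ≤ 0`; for `x = 0` it is the limit as `s → -∞`.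
-/

open MeasureTheory ProbabilityTheory Real Filter Topology

noncomputable def bernoulliCgf (p s : ℝ) : ℝ := log (p * exp s + (1 - p))

/-- At `x = 0` Lean's `0 * log 0 = 0` gives the convention `Λ*(0) = log (1 / (1 - p))`. -/
noncomputable def bernoulliRate (p x : ℝ) : ℝ :=
  x * log (x / p) + (1 - x) * log ((1 - x) / (1 - p))

section BernoulliCgf

variable {p : ℝ}

lemma bernoulli_mgf_pos (hp0 : 0 ≤ p) (hp1 : p ≤ 1) (s : ℝ) : 0 < p * exp s + (1 - p) := by
  rcases hp1.eq_or_lt with rfl | hp1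
  · simpa using exp_pos s
  · have := sub_pos.2 hp1
    positivity

lemma bernoulliCgf_le_half_bernoulliCgf_two_mul (hp0 : 0 ≤ p) (hp1 : p ≤ 1) (s : ℝ) :
    bernoulliCgf p s ≤ bernoulliCgf p (2 * s) / 2 := by
  have hsq : (p * exp s + (1 - p)) ^ 2 ≤ p * exp (2 * s) + (1 - p) := by
    have hvar : p * exp (2 * s) + (1 - p) - (p * exp s + (1 - p)) ^ 2
        = p * (1 - p) * (exp s - 1) ^ 2 := by
      rw [two_mul, exp_add]; ring
    linarith [mul_nonneg (mul_nonneg hp0 (sub_nonneg.2 hp1)) (sq_nonneg (exp s - 1))]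
  have hlog := log_le_log (pow_pos (bernoulli_mgf_pos hp0 hp1 s) 2) hsq
  rw [log_pow, Nat.cast_ofNat] at hlog
  rw [bernoulliCgf, bernoulliCgf]
  linarith

lemma tendsto_bernoulliCgf_atBot (hp1 : p < 1) :
    Tendsto (bernoulliCgf p) atBot (𝓝 (log (1 - p))) := by
  have hmgf : Tendsto (fun s => p * exp s + (1 - p)) atBot (𝓝 (1 - p)) := by
    simpa using (tendsto_exp_atBot.const_mul p).add_const (1 - p)
  exact (continuousAt_log (sub_pos.2 hp1).ne').tendsto.comp hmgf

lemma bernoulliRate_zero : bernoulliRate p 0 = -log (1 - p) := by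
  simp [bernoulliRate, log_inv]

/-- `log (x (1 - p) / (p (1 - x)))` solves `Λ'(s) = x`, so it attains `sup_s (s x - Λ(s))`. -/
lemma mul_sub_bernoulliCgf_log_eq_bernoulliRate (hp0 : 0 < p) (hp1 : p < 1) {x : ℝ}
    (hx0 : 0 < x) (hx1 : x < 1) :
    log (x * (1 - p) / (p * (1 - x))) * x - bernoulliCgf p (log (x * (1 - p) / (p * (1 - x))))
      = bernoulliRate p x := by
  have hq : 0 < 1 - p := sub_pos.2 hp1
  have hy : 0 < 1 - x := sub_pos.2 hx1
  have hmgf : p * exp (log (x * (1 - p) / (p * (1 - x)))) + (1 - p) = (1 - p) / (1 - x) := by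
    rw [exp_log (by positivity)]
    field_simp
    ring
  rw [bernoulliCgf, hmgf, bernoulliRate, log_div hq.ne' hy.ne',
    log_div (by positivity) (by positivity), log_mul hx0.ne' hq.ne', log_mul hp0.ne' hy.ne',
    log_div hx0.ne' hp0.ne', log_div hy.ne' hq.ne']
  ring

end BernoulliCgf

namespace ProbabilityTheory

variable {Ω : Type*} [MeasurableSpace Ω] {μ : Measure Ω} {n : ℕ} {p : unitInterval}

lemma hasLaw_binomial_of_measure_eq {X : Ω → ℕ} (hX : Measurable X)
    (h : ∀ k : ℕ, μ {ω | X ω = k} =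
      ENNReal.ofReal ((n.choose k : ℝ) * p ^ k * (1 - p) ^ (n - k))) :
    HasLaw X Bin(n, p) μ where
  aemeasurable := hX.aemeasurable
  map_eq := Measure.ext_of_singleton fun k => by
    rw [Measure.map_apply hX (measurableSet_singleton k), binomial_singleton]
    exact h k

variable {X : Ω → ℕ}

lemma HasLaw.integrable_exp_mul_binomial (hX : HasLaw X Bin(n, p) μ) (t : ℝ) :
    Integrable (fun ω => exp (t * X ω)) μ := by
  have := integrable_binomial (n := n) (p := p) (fun k : ℕ => exp (t * k))
  rw [← hX.map_eq] at this
  exact this.comp_aemeasurable hX.aemeasurable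

lemma HasLaw.cgf_binomial (hX : HasLaw X Bin(n, p) μ) (t : ℝ) :
    cgf (fun ω => (X ω : ℝ)) μ t = n * bernoulliCgf p t := by
  have hmgf : mgf (fun ω => (X ω : ℝ)) μ t = (p * exp t + (1 - p)) ^ n := by
    have hlaw : mgf (fun ω => (X ω : ℝ)) μ t = ∫ k : ℕ, exp (t * k) ∂Bin(n, p) :=
      hX.integral_comp (f := fun k : ℕ => exp (t * k)) .of_discrete
    rw [hlaw, integral_binomial, add_pow, Nat.range_succ_eq_Iic]
    refine Finset.sum_congr rfl fun k _ => ?_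
    rw [smul_eq_mul, mul_pow, ← exp_nat_mul]
    ring_nf
  rw [cgf, hmgf, log_pow, bernoulliCgf]

lemma measureReal_add_two_mul_le [IsFiniteMeasure μ] {n₁ n₂ : ℕ} {Z : Ω → ℕ}
    (hX : HasLaw X Bin(n₁, p) μ) (hZ : HasLaw Z Bin(n₂, p) μ) (hind : IndepFun X Z μ)
    (x : ℝ) {s : ℝ} (hs : s ≤ 0) :
    μ.real {ω | (X ω : ℝ) + 2 * (Z ω : ℝ) ≤ ((n₁ : ℝ) + 2 * n₂) * x} ≤
      exp (-(1 / 2) * ((n₁ : ℝ) + 2 * n₂) * (s * x - bernoulliCgf p s)) := by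
  obtain ⟨t, rfl⟩ : ∃ t, s = 2 * t := ⟨s / 2, by ring⟩
  have hXint := hX.integrable_exp_mul_binomial t
  have hZint : Integrable (fun ω => exp (t * (2 * (Z ω : ℝ)))) μ := by
    simpa only [← mul_assoc, mul_comm t 2] using hZ.integrable_exp_mul_binomial (2 * t)
  have hind' : IndepFun (fun ω => (X ω : ℝ)) (fun ω => 2 * (Z ω : ℝ)) μ :=
    hind.comp (φ := fun k : ℕ => (k : ℝ)) (ψ := fun k : ℕ => 2 * (k : ℝ))
      .of_discrete .of_discrete
  have hcgf : cgf ((fun ω => (X ω : ℝ)) + fun ω => 2 * (Z ω : ℝ)) μ t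
      = n₁ * bernoulliCgf p t + n₂ * bernoulliCgf p (2 * t) := by
    rw [hind'.cgf_add hXint hZint, hX.cgf_binomial, cgf, mgf_const_mul, ← cgf, hZ.cgf_binomial]
  have hhalf : n₁ * bernoulliCgf p t ≤ n₁ * (bernoulliCgf p (2 * t) / 2) :=
    mul_le_mul_of_nonneg_left (bernoulliCgf_le_half_bernoulliCgf_two_mul p.2.1 p.2.2 t)
      n₁.cast_nonneg
  refine (measure_le_le_exp_cgf _ (by linarith) (hind'.integrable_exp_mul_add hXint hZint)).trans ?_
  rw [hcgf, exp_le_exp]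
  linarith

end ProbabilityTheory

theorem stmt_17_general {Ω : Type*} [MeasurableSpace Ω] (μ : Measure Ω)
    [IsProbabilityMeasure μ] (p : ℝ) (hp0 : 0 < p) (hp1 : p < 1)
    (n₁ n₂ : ℕ)
    (X Z : Ω → ℕ) (hX : Measurable X) (hZ : Measurable Z)
    (hind : IndepFun X Z μ)
    (hXdist : ∀ i : ℕ, μ {ω | X ω = i} =
      ENNReal.ofReal ((n₁.choose i : ℝ) * p ^ i * (1 - p) ^ (n₁ - i)))
    (hZdist : ∀ i : ℕ, μ {ω | Z ω = i} =
      ENNReal.ofReal ((n₂.choose i : ℝ) * p ^ i * (1 - p) ^ (n₂ - i)))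
    (x : ℝ) (hx0 : 0 ≤ x) (hxp : x ≤ p) :
    (μ {ω | ((X ω : ℝ) + 2 * (Z ω : ℝ)) ≤ ((n₁ : ℝ) + 2 * n₂) * x}).toReal ≤
      Real.exp (-(1 / 2) * ((n₁ : ℝ) + 2 * n₂) *
        (x * Real.log (x / p) + (1 - x) * Real.log ((1 - x) / (1 - p)))) := by
  let p' : unitInterval := ⟨p, hp0.le, hp1.le⟩
  have hchernoff {s : ℝ} (hs : s ≤ 0) :=
    measureReal_add_two_mul_le (p := p') (hasLaw_binomial_of_measure_eq hX hXdist)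
      (hasLaw_binomial_of_measure_eq hZ hZdist) hind x hs
  change _ ≤ exp (-(1 / 2) * ((n₁ : ℝ) + 2 * n₂) * bernoulliRate p x)
  rcases hx0.eq_or_lt with rfl | hxpos
  · have hlim : Tendsto (fun s => s * 0 - bernoulliCgf p s) atBot (𝓝 (bernoulliRate p 0)) := by
      simpa [bernoulliRate_zero] using (tendsto_bernoulliCgf_atBot hp1).neg
    refine ge_of_tendsto ((continuous_exp.tendsto _).comp (hlim.const_mul _)) ?_
    filter_upwards [eventually_le_atBot 0] with s hs using hchernoff hs
  · have hs : log (x * (1 - p) / (p * (1 - x))) ≤ 0 := by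
      have hx1 : 0 < 1 - x := by linarith
      refine log_nonpos (by positivity) ((div_le_one (by positivity)).2 ?_)
      nlinarith
    rw [← mul_sub_bernoulliCgf_log_eq_bernoulliRate hp0 hp1 hxpos (hxp.trans_lt hp1)]
    exact hchernoff hs

theorem stmt_17 {Ω : Type*} [MeasurableSpace Ω] (μ : Measure Ω)
    [IsProbabilityMeasure μ] (p : ℝ) (hp0 : 0 < p) (hp1 : p < 1)
    (n₁ n₂ : ℕ) (hn₁ : 0 < n₁) (hn₂ : 0 < n₂)
    (X Z : Ω → ℕ) (hX : Measurable X) (hZ : Measurable Z)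
    (hind : IndepFun X Z μ)
    (hXdist : ∀ i : ℕ, μ {ω | X ω = i} =
      ENNReal.ofReal ((n₁.choose i : ℝ) * p ^ i * (1 - p) ^ (n₁ - i)))
    (hZdist : ∀ i : ℕ, μ {ω | Z ω = i} =
      ENNReal.ofReal ((n₂.choose i : ℝ) * p ^ i * (1 - p) ^ (n₂ - i)))
    (x : ℝ) (hx0 : 0 ≤ x) (hxp : x ≤ p) :
    (μ {ω | ((X ω : ℝ) + 2 * (Z ω : ℝ)) ≤ ((n₁ : ℝ) + 2 * n₂) * x}).toReal ≤
      Real.exp (-(1 / 2) * ((n₁ : ℝ) + 2 * n₂) *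
        (x * Real.log (x / p) + (1 - x) * Real.log ((1 - x) / (1 - p)))) :=
  stmt_17_general μ p hp0 hp1 n₁ n₂ X Z hX hZ hind hXdist hZdist x hx0 hxp
end

section
/- For reals τ, κ with 0 < τ < 2 and κ > 0, if ι(τ,κ) = 0 where ι(τ,κ) = ½((κ − τ⌊κ/τ⌋)(κ − τ⌊κ/τ⌋ − τ) − κ(κ − τ − 2)), then κ > 2τ. -/
theorem stmt_19 (τ κ : ℝ) (hτ0 : 0 < τ) (hτ2 : τ < 2) (hκ : 0 < κ)
    (h : iota τ κ = 0) : 2 * τ < κ := by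
  by_contra hc
  push_neg at hc
  unfold iota at h
  have hlow := Int.floor_le (κ / τ)
  have hfl0 : (0:ℤ) ≤ ⌊κ / τ⌋ := Int.floor_nonneg.mpr (le_of_lt (div_pos hκ hτ0))
  have hfl2 : ⌊κ / τ⌋ ≤ 2 := by
    have h2 : κ / τ ≤ 2 := by rw [div_le_iff₀ hτ0]; linarith
    have : ((⌊κ / τ⌋ : ℤ) : ℝ) ≤ 2 := le_trans hlow h2
    exact_mod_cast this
  set n := ⌊κ / τ⌋ with hn
  interval_cases n
  · push_cast at h
    nlinarith
  · push_cast at h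
    nlinarith [mul_pos hτ0 hκ, mul_nonneg (le_of_lt hτ0) (sub_nonneg.mpr hc)]
  · push_cast at hlow
    rw [le_div_iff₀ hτ0] at hlow
    push_cast at h
    nlinarith
end
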